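/- If u is a nonconstant inner function on 𝔻 such that the Beurling subspace uH² is invariant under C_{φ_t} for every t ≥ 0 (equivalently, the model space (uH²)^⊥ is Cesàro-invariant), then u has no zeros in 𝔻; in particular u is a singular inner function. -/
import Mathlib


open Complex Metric Filter
open Topology

noncomputable def meanSq (f : ℂ → ℂ) (r : ℝ) : ℝ :=
  (2 * Real.pi)⁻¹ * ∫ θ in (0:ℝ)..(2 * Real.pi), ‖f ((r : ℂ) * Complex.exp (θ * Complex.I))‖ ^ 2

def MemH2 (f : ℂ → ℂ) : Prop :=
  DifferentiableOn ℂ f (ball 0 1) ∧ BddAbove (meanSq f '' Set.Ioo 0 1)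

/-- An inner function: bounded analytic on `𝔻` with radial limits of modulus `1`
almost everywhere on the circle. -/
def IsInnerFunction (u : ℂ → ℂ) : Prop :=
  DifferentiableOn ℂ u (ball 0 1) ∧ (∀ z ∈ ball (0 : ℂ) 1, ‖u z‖ ≤ 1) ∧
    ∀ᵐ θ : ℝ, Tendsto (fun r : ℝ => ‖u ((r : ℂ) * Complex.exp (θ * Complex.I))‖)
      (nhdsWithin 1 (Set.Iio 1)) (nhds 1)

noncomputable def phiFlow (t : ℝ) (z : ℂ) : ℂ :=
  (Real.exp (-t) : ℂ) * z + 1 - (Real.exp (-t) : ℂ)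

lemma memH2_one : MemH2 (fun _ : ℂ => (1 : ℂ)) := by
  constructor
  · exact differentiableOn_const 1
  · refine ⟨1, ?_⟩
    rintro x ⟨r, -, rfl⟩
    have hπ : (0:ℝ) < 2 * Real.pi := by positivity
    have hπ' : Real.pi ≠ 0 := Real.pi_ne_zero
    simp only [meanSq, norm_one, one_pow, intervalIntegral.integral_const, sub_zero, smul_eq_mul,
      mul_one]
    rw [inv_mul_cancel₀ hπ.ne']

lemma phiFlow_mem_ball {z : ℂ} (hz : z ∈ ball (0:ℂ) 1) (t : ℝ) (ht : 0 ≤ t) :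
    phiFlow t z ∈ ball (0:ℂ) 1 := by
  rw [mem_ball_zero_iff] at hz ⊢
  set e := Real.exp (-t) with he
  have he0 : 0 < e := Real.exp_pos _
  have he1 : e ≤ 1 := Real.exp_le_one_iff.mpr (by linarith)
  have : phiFlow t z = (e : ℂ) * z + ((1 - e : ℝ) : ℂ) := by
    simp [phiFlow, he]; ring
  rw [this]
  calc ‖(e : ℂ) * z + ((1 - e : ℝ) : ℂ)‖ ≤ ‖(e : ℂ) * z‖ + ‖((1 - e : ℝ) : ℂ)‖ :=
        norm_add_le _ _
    _ = e * ‖z‖ + (1 - e) := by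
        rw [norm_mul, Complex.norm_real, Complex.norm_real,
          Real.norm_of_nonneg he0.le, Real.norm_of_nonneg (by linarith)]
    _ < e * 1 + (1 - e) := by
        have := mul_lt_mul_of_pos_left hz he0
        linarith
    _ = 1 := by ring

/-- If `u` is a nonconstant inner function such that `uH²` is invariant under `C_{φ_t}` for
every `t ≥ 0`, then `u` has no zeros in `𝔻` (in particular `u` is singular inner). -/
theorem inner_invariant_no_zeros (u : ℂ → ℂ) (hu : IsInnerFunction u)
    (hnc : ∃ z ∈ ball (0 : ℂ) 1, ∃ w ∈ ball (0 : ℂ) 1, u z ≠ u w)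
    (hinv : ∀ t : ℝ, 0 ≤ t → ∀ g : ℂ → ℂ, MemH2 g →
      ∃ h : ℂ → ℂ, MemH2 h ∧
        ∀ z ∈ ball (0 : ℂ) 1, u (phiFlow t z) * g (phiFlow t z) = u z * h z) :
    ∀ z ∈ ball (0 : ℂ) 1, u z ≠ 0 := by
  intro z₀ hz₀ hu0
  -- u vanishes along the flow curve through z₀
  have key : ∀ t : ℝ, 0 ≤ t → u (phiFlow t z₀) = 0 := by
    intro t ht
    obtain ⟨h, -, hh⟩ := hinv t ht (fun _ => (1:ℂ)) memH2_one
    have := hh z₀ hz₀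
    simpa [hu0] using this
  have hz₀1 : z₀ ≠ 1 := by
    intro h; rw [mem_ball_zero_iff, h] at hz₀; simp at hz₀
  -- the sequence of zeros approaching z₀
  set c : ℕ → ℂ := fun n => phiFlow (1 / (n + 1)) z₀ with hc
  have hcne : ∀ n, c n ≠ z₀ := by
    intro n h
    have hE : Real.exp (-(1 / ((n:ℝ) + 1))) ≠ 1 := by
      have : (0:ℝ) < 1 / ((n:ℝ) + 1) := by positivity
      exact ne_of_lt (Real.exp_lt_one_iff.mpr (by linarith))
    have : ((Real.exp (-(1 / ((n:ℝ) + 1))) : ℂ) - 1) * (z₀ - 1) = 0 := by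
      have := h
      simp only [hc, phiFlow] at this
      linear_combination this
    rcases mul_eq_zero.1 this with h1 | h2
    · apply hE
      have h1' : (Real.exp (-(1 / ((n:ℝ) + 1))) : ℂ) = 1 := sub_eq_zero.mp h1
      exact_mod_cast h1'
    · exact hz₀1 (sub_eq_zero.mp h2)
  have hczero : ∀ n, u (c n) = 0 := fun n => key _ (by positivity)
  have hctend : Tendsto c atTop (𝓝 z₀) := by
    have h1 : Tendsto (fun n : ℕ => 1 / ((n:ℝ) + 1)) atTop (𝓝 0) :=
      tendsto_one_div_add_atTop_nhds_zero_nat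
    have hcont : Tendsto (fun t : ℝ => phiFlow t z₀) (𝓝 0) (𝓝 z₀) := by
      have : ContinuousAt (fun t : ℝ => phiFlow t z₀) 0 := by
        unfold phiFlow
        fun_prop
      have h0 : phiFlow 0 z₀ = z₀ := by simp [phiFlow]
      simpa [h0] using this.tendsto
    exact hcont.comp h1
  have hctend' : Tendsto c atTop (𝓝[≠] z₀) :=
    tendsto_nhdsWithin_of_tendsto_nhds_of_eventually_within c hctend
      (Eventually.of_forall hcne)
  have hfreq : ∃ᶠ z in 𝓝[≠] z₀, u z = 0 :=
    hctend'.frequently (Frequently.of_forall hczero)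
  have hAn : AnalyticOnNhd ℂ u (ball (0:ℂ) 1) := hu.1.analyticOnNhd isOpen_ball
  have hconn : IsPreconnected (ball (0:ℂ) 1) := (convex_ball _ _).isPreconnected
  have hzero : Set.EqOn u 0 (ball (0:ℂ) 1) :=
    hAn.eqOn_zero_of_preconnected_of_frequently_eq_zero hconn hz₀ hfreq
  obtain ⟨z, hz, w, hw, hne⟩ := hnc
  exact hne (by rw [hzero hz, hzero hw]; rfl)
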